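/- arXiv:alg-geom/9711030 — 4 statements merged into one kernel-verified Lean document; each statement's English description precedes it below -/
import Mathlib

section
/- Let p: Σ × J → J be the projection, where J is the Jacobian of the genus-g curve Σ, and let 𝓛 → Σ × J be the universal (Poincaré) line bundle with c₁(𝓛) = Σᵢ γᵢ ⊗ φᵢ, so that c₁(𝓛)² = −2[Σ] ⊗ ω. Let Λ be a line bundle of degree 1 on Σ. Then the Chern character of 𝓔 = R¹p_*(𝓛² ⊗ Λ^{-1}) equals g + 4ω. -/
/-- Grothendieck–Riemann–Roch computation of `ch(𝓔)` for `𝓔 = R¹p_*(𝓛² ⊗ Λ⁻¹)`, where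
`p : Σ × J → J` is the projection onto the Jacobian.  We model `B = H^{even}(J;ℚ)` and
`A = H^{even}(Σ × J;ℚ)` as commutative `ℚ`-algebras, `A` a `B`-algebra via pullback, with
`p : A →ₗ[B] B` the pushforward (integration over the fiber `Σ`).  `Sig = [Σ]`,
`Λc = c₁(Λ)`, `K = c₁(K_Σ)`, `cL = c₁(𝓛)` satisfy the stated intersection identities
(`p_*1 = 0`, `p_*[Σ] = 1`, `p_*K = 2g−2`, `p_*Λ = 1`, `p_*c₁(𝓛) = 0`,
`c₁(𝓛)² = −2ω·[Σ]`, and all products of two fiber classes vanish).  Then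
`ch(𝓔) = −p_*( ch(𝓛)² · ch(Λ)⁻¹ · Todd(T_Σ) ) = g + 4ω`. -/
theorem stmt_10 (g : ℕ) (B : Type*) [CommRing B] [Algebra ℚ B]
    (A : Type*) [CommRing A] [Algebra ℚ A] [Algebra B A] [IsScalarTower ℚ B A]
    (p : A →ₗ[B] B) (ω : B) (Sig Λc K cL : A) (chE : B)
    (hp1 : p 1 = 0) (hpS : p Sig = 1)
    (hpK : p K = (2 * (g : ℚ) - 2) • (1 : B))
    (hpΛ : p Λc = 1) (hpc : p cL = 0)
    (hc2 : cL ^ 2 = (-2 : ℚ) • (algebraMap B A ω * Sig))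
    (hSS : Sig * Sig = 0) (hSK : Sig * K = 0) (hSΛ : Sig * Λc = 0) (hSc : Sig * cL = 0)
    (hKK : K * K = 0) (hKΛ : K * Λc = 0) (hKc : K * cL = 0)
    (hΛΛ : Λc * Λc = 0) (hΛc : Λc * cL = 0)
    (hch : chE = - p ((1 + cL + (2 : ℚ)⁻¹ • cL ^ 2) ^ 2 * (1 - Λc)
        * (1 - (2 : ℚ)⁻¹ • K))) :
    chE = (g : ℚ) • (1 : B) + (4 : ℚ) • ω := by
  set w : A := algebraMap B A ω * Sig with hw_def
  set s : A := (2 : ℚ)⁻¹ • K with hs_def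
  -- half of c₁(𝓛)² is -ω⊗[Σ]
  have hw1 : (2 : ℚ)⁻¹ • cL ^ 2 = -w := by
    rw [hc2, smul_smul]; norm_num
  have hc2' : cL ^ 2 = -(2 * w) := by
    have := congrArg (fun x : A => (2 : ℚ) • x) hw1
    simpa [smul_smul, two_mul, two_smul, smul_neg] using this
  -- vanishing products
  have hww : w * w = 0 := by
    rw [hw_def, mul_assoc, mul_comm Sig, mul_assoc, hSS, mul_zero, mul_zero]
  have hcw : cL * w = 0 := by
    rw [hw_def, mul_comm cL, mul_assoc, hSc, mul_zero]
  have hwΛ : w * Λc = 0 := by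
    rw [hw_def, mul_assoc, hSΛ, mul_zero]
  have hcΛ : cL * Λc = 0 := by rw [mul_comm]; exact hΛc
  have hcs : cL * s = 0 := by
    rw [hs_def, mul_smul_comm, mul_comm, hKc, smul_zero]
  have hws : w * s = 0 := by
    rw [hs_def, mul_smul_comm, hw_def, mul_assoc, hSK, mul_zero, smul_zero]
  have hΛs : Λc * s = 0 := by
    rw [hs_def, mul_smul_comm, mul_comm, hKΛ, smul_zero]
  -- expand the GRR integrand
  have e1 : (1 + cL + -w) ^ 2 = 1 + 2 * cL - 4 * w := by
    linear_combination hc2' + hww + (-2 : A) * hcw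
  have e2 : (1 + 2 * cL - 4 * w) * (1 - Λc) = 1 + 2 * cL - 4 * w - Λc := by
    linear_combination (-2 : A) * hcΛ + (4 : A) * hwΛ
  have e3 : (1 + 2 * cL - 4 * w - Λc) * (1 - s) = 1 + 2 * cL - 4 * w - Λc - s := by
    linear_combination (-2 : A) * hcs + (4 : A) * hws + hΛs
  rw [hw1, e1, e2, e3] at hch
  -- push forward term by term
  have h2cL : (2 : A) * cL = (2 : B) • cL := by
    rw [Algebra.smul_def, map_ofNat]
  have h4w : (4 : A) * w = ((4 : B) * ω) • Sig := by
    rw [hw_def, ← mul_assoc, Algebra.smul_def, map_mul, map_ofNat]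
  have hpw : p ((4 : A) * w) = (4 : B) * ω := by
    rw [h4w, map_smul, hpS, smul_eq_mul, mul_one]
  have hpcL2 : p ((2 : A) * cL) = 0 := by
    rw [h2cL, map_smul, hpc, smul_zero]
  have hps : p s = (2 : ℚ)⁻¹ • ((2 * (g : ℚ) - 2) • (1 : B)) := by
    rw [hs_def, LinearMap.map_smul_of_tower, hpK]
  have harr : (1 + 2 * cL - 4 * w - Λc - s : A)
      = 1 + (2 : A) * cL + (-((4 : A) * w)) + (-Λc) + (-s) := by ring
  rw [harr, map_add, map_add, map_add, map_add, map_neg, map_neg, map_neg,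
    hp1, hpcL2, hpw, hpΛ, hps] at hch
  rw [hch]
  have h4 : (4 : B) * ω = (4 : ℚ) • ω := by
    rw [Algebra.smul_def, map_ofNat]
  rw [h4, smul_smul]
  have hco : ((2 : ℚ)⁻¹ * (2 * (g : ℚ) - 2)) = (g : ℚ) - 1 := by ring
  rw [hco, sub_smul, one_smul]
  abel
end

section
/- Let A be the graded-commutative Q-algebra Λ(φ₁,...,φ_{2g})[h]/(h^g + c₁h^{g-1} + ... + c_g − 1), where cᵢ = (4^i/i!)ω^i with ω = Σ_{i=1}^g φᵢφ_{i+g}, deg φᵢ = 1, deg h = 2. Then for every 0 ≤ i ≤ g and every s in the subalgebra generated by the φᵢ with s of degree 2g−2i, modulo the ideal of elements of h-degree < g−1 in top total degree 4g−2, one has h^{2g-1+i}·s ≡ ((−8)^i/i!)·ω^i·s·h^{g-1}. -/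
open Polynomial Finset
set_option synthInstance.maxHeartbeats 1000000
set_option maxHeartbeats 1000000

/-- The generator `φ i` of the exterior algebra `Λ(φ₁,…,φ_{2g})` over `ℚ`. -/
noncomputable def phiE (g : ℕ) (i : Fin (2 * g)) :
    ExteriorAlgebra ℚ (Fin (2 * g) → ℚ) :=
  ExteriorAlgebra.ι ℚ (Pi.single i 1)

/-- The symplectic class `ω = ∑_{i=1}^g φ_i φ_{i+g}`. -/
noncomputable def omegaE (g : ℕ) : ExteriorAlgebra ℚ (Fin (2 * g) → ℚ) :=
  ∑ i : Fin g, phiE g ⟨(i : ℕ), by have := i.isLt; omega⟩ *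
    phiE g ⟨(i : ℕ) + g, by have := i.isLt; omega⟩

/-- The Chern class `c_j = (4^j/j!) ω^j`. -/
noncomputable def cE (g j : ℕ) : ExteriorAlgebra ℚ (Fin (2 * g) → ℚ) :=
  ((4 : ℚ) ^ j / (Nat.factorial j)) • (omegaE g) ^ j

/-- The quantum relation `h^g + c₁h^{g−1} + ⋯ + c_g − 1` in `Λ(φ₁,…,φ_{2g})[h]`. -/
noncomputable def relE (g : ℕ) : Polynomial (ExteriorAlgebra ℚ (Fin (2 * g) → ℚ)) :=
  X ^ g + ∑ j ∈ Finset.range g, C (cE g (j + 1)) * X ^ (g - 1 - j) - 1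



/-- Truncated exponential polynomial in `ℚ[X]`. -/
noncomputable def qqE (a : ℚ) (n : ℕ) : Polynomial ℚ :=
  ∑ k ∈ Finset.range n, C (a ^ k / (Nat.factorial k : ℚ)) * X ^ k

lemma conv_aux (a b : ℚ) (m : ℕ) :
    ∑ k ∈ range (m + 1),
      a ^ k / (Nat.factorial k : ℚ) * (b ^ (m - k) / (Nat.factorial (m - k) : ℚ))
      = (a + b) ^ m / (Nat.factorial m : ℚ) := by
  rw [add_pow, Finset.sum_div]
  refine Finset.sum_congr rfl fun k hk => ?_
  have hk' : k ≤ m := Nat.lt_succ_iff.mp (Finset.mem_range.mp hk)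
  have h := Nat.choose_mul_factorial_mul_factorial hk'
  have h1 : (Nat.factorial k : ℚ) ≠ 0 := Nat.cast_ne_zero.mpr (Nat.factorial_ne_zero k)
  have h2 : (Nat.factorial (m - k) : ℚ) ≠ 0 := Nat.cast_ne_zero.mpr (Nat.factorial_ne_zero _)
  have h3 : (Nat.factorial m : ℚ) ≠ 0 := Nat.cast_ne_zero.mpr (Nat.factorial_ne_zero m)
  have h' : ((m.choose k : ℚ) * (Nat.factorial k : ℚ) * (Nat.factorial (m - k) : ℚ))
      = (Nat.factorial m : ℚ) := by exact_mod_cast congrArg (Nat.cast : ℕ → ℚ) h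
  rw [div_mul_div_comm, div_eq_div_iff (by positivity) h3, ← h']
  ring

lemma coeff_qqE (a : ℚ) (n k : ℕ) :
    (qqE a n).coeff k = if k < n then a ^ k / (Nat.factorial k : ℚ) else 0 := by
  rw [qqE, finset_sum_coeff]
  simp only [coeff_C_mul, coeff_X_pow, mul_ite, mul_one, mul_zero]
  rw [Finset.sum_ite_eq (range n) k (fun j => a ^ j / (Nat.factorial j : ℚ))]
  simp [Finset.mem_range]

lemma qq_mul_F1 (i g : ℕ) (hig : i ≤ g) :
    ∃ t : Polynomial ℚ, qqE (-4) (i + 1) * qqE 4 (g + 1) = 1 + X ^ (i + 1) * t := by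
  have hdvd : X ^ (i + 1) ∣ qqE (-4) (i + 1) * qqE 4 (g + 1) - 1 := by
    rw [X_pow_dvd_iff]
    intro d hd
    have hdi : d ≤ i := Nat.lt_succ_iff.mp hd
    rw [coeff_sub, coeff_mul, Finset.Nat.sum_antidiagonal_eq_sum_range_succ_mk]
    have : ∀ k ∈ range (d + 1),
        (qqE (-4) (i+1)).coeff k * (qqE 4 (g+1)).coeff (d - k)
        = (-4:ℚ) ^ k / (Nat.factorial k : ℚ) * ((4:ℚ) ^ (d-k) / (Nat.factorial (d-k) : ℚ)) := by
      intro k hk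
      have hk' : k ≤ d := Nat.lt_succ_iff.mp (Finset.mem_range.mp hk)
      rw [coeff_qqE, coeff_qqE, if_pos (by omega), if_pos (by omega)]
    rw [Finset.sum_congr rfl this, conv_aux]
    have : (-4 : ℚ) + 4 = 0 := by norm_num
    rw [this]
    rcases Nat.eq_zero_or_pos d with h0 | h0
    · subst h0; simp
    · rw [zero_pow (by omega), Polynomial.coeff_one, if_neg (by omega)]
      simp
  obtain ⟨t, ht⟩ := hdvd
  exact ⟨t, by rw [← ht]; ring⟩

lemma qq_mul_F2 (i g : ℕ) (hig : i ≤ g) :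
    ∃ t : Polynomial ℚ, qqE (-8) i * qqE 4 (g + 1)
      = qqE (-4) i
        + C ((-4:ℚ) ^ i / (Nat.factorial i : ℚ) - (-8:ℚ) ^ i / (Nat.factorial i : ℚ)) * X ^ i
        + X ^ (i + 1) * t := by
  have hdvd : X ^ (i + 1) ∣ qqE (-8) i * qqE 4 (g + 1)
      - (qqE (-4) i
        + C ((-4:ℚ) ^ i / (Nat.factorial i : ℚ) - (-8:ℚ) ^ i / (Nat.factorial i : ℚ)) * X ^ i) := by
    rw [X_pow_dvd_iff]
    intro d hd
    have hdi : d ≤ i := Nat.lt_succ_iff.mp hd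
    rw [coeff_sub, coeff_mul, Finset.Nat.sum_antidiagonal_eq_sum_range_succ_mk]
    rcases lt_or_eq_of_le hdi with hlt | heq
    · have : ∀ k ∈ range (d + 1),
          (qqE (-8) i).coeff k * (qqE 4 (g+1)).coeff (d - k)
          = (-8:ℚ) ^ k / (Nat.factorial k : ℚ) * ((4:ℚ) ^ (d-k) / (Nat.factorial (d-k) : ℚ)) := by
        intro k hk
        have hk' : k ≤ d := Nat.lt_succ_iff.mp (Finset.mem_range.mp hk)
        rw [coeff_qqE, coeff_qqE, if_pos (by omega), if_pos (by omega)]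
      rw [Finset.sum_congr rfl this, conv_aux]
      rw [coeff_add, coeff_qqE, if_pos hlt, coeff_C_mul, coeff_X_pow, if_neg (by omega)]
      norm_num
    · subst heq
      rw [Finset.sum_range_succ]
      have : ∀ k ∈ range d,
          (qqE (-8) d).coeff k * (qqE 4 (g+1)).coeff (d - k)
          = (-8:ℚ) ^ k / (Nat.factorial k : ℚ) * ((4:ℚ) ^ (d-k) / (Nat.factorial (d-k) : ℚ)) := by
        intro k hk
        have hk' : k < d := Finset.mem_range.mp hk
        rw [coeff_qqE, coeff_qqE, if_pos (by omega), if_pos (by omega)]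
      rw [Finset.sum_congr rfl this]
      have hlast : (qqE (-8) d).coeff d * (qqE 4 (g+1)).coeff (d - d) = 0 := by
        rw [coeff_qqE, if_neg (by omega), zero_mul]
      rw [hlast, add_zero]
      have hfull : ∑ k ∈ range d,
          (-8:ℚ) ^ k / (Nat.factorial k : ℚ) * ((4:ℚ) ^ (d-k) / (Nat.factorial (d-k) : ℚ))
          = ((-8:ℚ) + 4) ^ d / (Nat.factorial d : ℚ)
            - (-8:ℚ) ^ d / (Nat.factorial d : ℚ) := by
        rw [← conv_aux (-8) 4 d, Finset.sum_range_succ]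
        simp
      rw [hfull]
      rw [coeff_add, coeff_qqE, if_neg (by omega), coeff_C_mul, coeff_X_pow, if_pos rfl]
      norm_num
  obtain ⟨t, ht⟩ := hdvd
  exact ⟨t, by rw [← ht]; ring⟩

lemma iota_swap {M : Type*} [AddCommGroup M] [Module ℚ M] (a b : M) :
    ExteriorAlgebra.ι ℚ a * ExteriorAlgebra.ι ℚ b
      = -(ExteriorAlgebra.ι ℚ b * ExteriorAlgebra.ι ℚ a) :=
  eq_neg_of_add_eq_zero_left (ExteriorAlgebra.ι_add_mul_swap a b)

lemma iota_pair_central {M : Type*} [AddCommGroup M] [Module ℚ M]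
    (u v : M) (x : ExteriorAlgebra ℚ M) :
    ExteriorAlgebra.ι ℚ u * ExteriorAlgebra.ι ℚ v * x
      = x * (ExteriorAlgebra.ι ℚ u * ExteriorAlgebra.ι ℚ v) := by
  induction x using ExteriorAlgebra.induction with
  | algebraMap r => rw [← Algebra.commutes]
  | ι m =>
      rw [mul_assoc, iota_swap v m, mul_neg, ← mul_assoc, iota_swap u m,
        neg_mul, neg_neg, mul_assoc]
  | mul a b ha hb => rw [← mul_assoc, ha, mul_assoc, hb, ← mul_assoc]
  | add a b ha hb => rw [mul_add, ha, hb, add_mul]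

lemma omega_commute (g : ℕ) (x : ExteriorAlgebra ℚ (Fin (2 * g) → ℚ)) :
    Commute (omegaE g) x := by
  unfold Commute SemiconjBy
  rw [omegaE, Finset.sum_mul, Finset.mul_sum]
  exact Finset.sum_congr rfl fun j _ => (iota_pair_central _ _ x)

lemma omega_mem (g : ℕ) :
    omegaE g ∈ (LinearMap.range (ExteriorAlgebra.ι ℚ (M := Fin (2 * g) → ℚ))) ^ 2 := by
  rw [pow_two]
  exact Submodule.sum_mem _ fun j _ =>
    Submodule.mul_mem_mul (LinearMap.mem_range_self _ _) (LinearMap.mem_range_self _ _)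

lemma omega_pow_mul_mem (g k m : ℕ) (s : ExteriorAlgebra ℚ (Fin (2 * g) → ℚ))
    (hs : s ∈ (LinearMap.range (ExteriorAlgebra.ι ℚ (M := Fin (2 * g) → ℚ))) ^ m) :
    omegaE g ^ k * s
      ∈ (LinearMap.range (ExteriorAlgebra.ι ℚ (M := Fin (2 * g) → ℚ))) ^ (2 * k + m) := by
  have h1 : omegaE g ^ k
      ∈ (LinearMap.range (ExteriorAlgebra.ι ℚ (M := Fin (2 * g) → ℚ))) ^ (2 * k) := by
    rw [pow_mul]
    exact Submodule.pow_mem_pow _ (omega_mem g) k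
  rw [pow_add]
  exact Submodule.mul_mem_mul h1 hs

set_option synthInstance.maxHeartbeats 1000000 in
lemma range_pow_eq_bot (g n : ℕ) (h : 2 * g < n) :
    (LinearMap.range (ExteriorAlgebra.ι ℚ (M := Fin (2 * g) → ℚ))) ^ n = ⊥ := by
  change (⋀[ℚ]^n (Fin (2*g) → ℚ)) = ⊥
  rw [← ExteriorAlgebra.ιMulti_span_fixedDegree]
  rw [Submodule.span_eq_bot]
  rintro x ⟨v, rfl⟩
  apply AlternatingMap.map_linearDependent
  intro hli
  have := hli.fintype_card_le_finrank
  simp only [Fintype.card_fin] at this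
  rw [Module.finrank_pi ℚ] at this
  simp only [Fintype.card_fin] at this
  omega

noncomputable def zE (g : ℕ) : Polynomial (ExteriorAlgebra ℚ (Fin (2 * g) → ℚ)) :=
  C (omegaE g) * X

lemma zE_pow (g k : ℕ) : zE g ^ k = C (omegaE g ^ k) * X ^ k := by
  have hc : Commute (C (omegaE g)) (X : Polynomial (ExteriorAlgebra ℚ (Fin (2 * g) → ℚ))) :=
    (Polynomial.X_mul).symm
  rw [zE, hc.mul_pow, ← map_pow]

lemma aeval_term (g : ℕ) (c : ℚ) (k : ℕ) :
    aeval (zE g) (C c * X ^ k) = C (c • omegaE g ^ k) * X ^ k := by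
  rw [map_mul, map_pow, aeval_X, aeval_C, zE_pow]
  rw [Polynomial.algebraMap_apply, ← mul_assoc, ← map_mul, ← Algebra.smul_def]

lemma key_term (g : ℕ) (s : ExteriorAlgebra ℚ (Fin (2 * g) → ℚ)) (c : ℚ) (k : ℕ) :
    C s * aeval (zE g) (C c * X ^ k) = C (c • (omegaE g ^ k * s)) * X ^ k := by
  rw [aeval_term, ← mul_assoc, ← map_mul]
  congr 2
  rw [mul_smul_comm, ← ((omega_commute g s).pow_left k).eq]

lemma Cs_aeval_qq (g : ℕ) (s : ExteriorAlgebra ℚ (Fin (2 * g) → ℚ)) (a : ℚ) (n : ℕ) :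
    C s * aeval (zE g) (qqE a n)
      = ∑ k ∈ range n, C ((a ^ k / (Nat.factorial k : ℚ)) • (omegaE g ^ k * s)) * X ^ k := by
  rw [qqE, map_sum, Finset.mul_sum]
  exact Finset.sum_congr rfl fun k _ => key_term g s _ k

lemma aeval_qq (g : ℕ) (a : ℚ) (n : ℕ) :
    aeval (zE g) (qqE a n)
      = ∑ k ∈ range n, C ((a ^ k / (Nat.factorial k : ℚ)) • omegaE g ^ k) * X ^ k := by
  rw [qqE, map_sum]
  exact Finset.sum_congr rfl fun k _ => aeval_term g _ k

lemma omega_pow_mul_s_zero (g i k : ℕ) (hi : i ≤ g) (hk : i < k)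
    (s : ExteriorAlgebra ℚ (Fin (2 * g) → ℚ))
    (hs : s ∈ (LinearMap.range (ExteriorAlgebra.ι ℚ (M := Fin (2 * g) → ℚ))) ^ (2 * g - 2 * i)) :
    omegaE g ^ k * s = 0 := by
  have h := omega_pow_mul_mem g k (2 * g - 2 * i) s hs
  rw [range_pow_eq_bot g _ (by omega), Submodule.mem_bot] at h
  exact h

lemma Cs_aeval_trunc (g i : ℕ) (hi : i ≤ g)
    (s : ExteriorAlgebra ℚ (Fin (2 * g) → ℚ))
    (hs : s ∈ (LinearMap.range (ExteriorAlgebra.ι ℚ (M := Fin (2 * g) → ℚ))) ^ (2 * g - 2 * i))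
    (t : Polynomial ℚ) :
    C s * aeval (zE g) (X ^ (i + 1) * t) = 0 := by
  rw [map_mul, map_pow, aeval_X, zE_pow, ← mul_assoc, ← mul_assoc, ← map_mul]
  have : s * omegaE g ^ (i + 1) = 0 := by
    rw [((omega_commute g s).pow_left (i + 1)).eq.symm]
    exact omega_pow_mul_s_zero g i (i + 1) hi (by omega) s hs
  rw [this, map_zero, zero_mul, zero_mul]

lemma reflect_finset_sum {R : Type*} [Semiring R] (N : ℕ) {ι : Type*} (S : Finset ι)
    (f : ι → Polynomial R) :
    reflect N (∑ k ∈ S, f k) = ∑ k ∈ S, reflect N (f k) := by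
  classical
  induction S using Finset.induction_on with
  | empty => simp [reflect_zero]
  | insert a S h ih => rw [Finset.sum_insert h, Finset.sum_insert h, reflect_add, ih]

noncomputable def PDq (g i : ℕ) (s : ExteriorAlgebra ℚ (Fin (2 * g) → ℚ)) :
    Polynomial (ExteriorAlgebra ℚ (Fin (2 * g) → ℚ)) :=
  ∑ k ∈ range (i + 1), C (((-4:ℚ) ^ k / (Nat.factorial k : ℚ)) • (omegaE g ^ k * s)) * X ^ (i - k)

noncomputable def PBq (g i : ℕ) (s : ExteriorAlgebra ℚ (Fin (2 * g) → ℚ)) :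
    Polynomial (ExteriorAlgebra ℚ (Fin (2 * g) → ℚ)) :=
  ∑ k ∈ range i, C (((-8:ℚ) ^ k / (Nat.factorial k : ℚ)) • (omegaE g ^ k * s)) * X ^ (i - (k+1))

noncomputable def PDlXq (g i : ℕ) (s : ExteriorAlgebra ℚ (Fin (2 * g) → ℚ)) :
    Polynomial (ExteriorAlgebra ℚ (Fin (2 * g) → ℚ)) :=
  ∑ k ∈ range i,
    C (((-4:ℚ) ^ k / (Nat.factorial k : ℚ)) • (omegaE g ^ k * s)) * X ^ (i + g - (k+1))

noncomputable def PAq (g : ℕ) : Polynomial (ExteriorAlgebra ℚ (Fin (2 * g) → ℚ)) :=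
  ∑ j ∈ range (g + 1), C (cE g j) * X ^ (g - j)

lemma PAq_eq_relE (g : ℕ) : PAq g = relE g + 1 := by
  rw [PAq, Finset.sum_range_succ']
  have h0 : cE g 0 = 1 := by simp [cE]
  have hexp : ∀ j, g - (j + 1) = g - 1 - j := fun j => by omega
  rw [h0, relE]
  rw [Finset.sum_congr rfl fun j _ => by rw [hexp j]]
  simp only [Nat.sub_zero, map_one, one_mul]
  abel

lemma X_shift (g : ℕ) (s : ExteriorAlgebra ℚ (Fin (2 * g) → ℚ)) (a : ℚ) (n : ℕ) :
    X * (C s * aeval (zE g) (qqE a n))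
      = ∑ k ∈ range n, C ((a ^ k / (Nat.factorial k : ℚ)) • (omegaE g ^ k * s)) * X ^ (k+1) := by
  rw [Cs_aeval_qq, Finset.mul_sum]
  refine Finset.sum_congr rfl fun k _ => ?_
  rw [X_mul, mul_assoc, ← pow_succ]

lemma natDeg_sum_le {R : Type*} [Semiring R] {ι : Type*} (S : Finset ι)
    (m : ι → R) (e : ι → ℕ) (N : ℕ) (h : ∀ k ∈ S, e k ≤ N) :
    (∑ k ∈ S, C (m k) * X ^ (e k)).natDegree ≤ N :=
  natDegree_sum_le_of_forall_le S _ fun k hk =>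
    (natDegree_C_mul_X_pow_le (m k) (e k)).trans (h k hk)

lemma refl_sum {R : Type*} [Semiring R] {ι : Type*} (N : ℕ) (S : Finset ι)
    (m : ι → R) (e : ι → ℕ) (h : ∀ k ∈ S, e k ≤ N) :
    reflect N (∑ k ∈ S, C (m k) * X ^ (e k)) = ∑ k ∈ S, C (m k) * X ^ (N - e k) := by
  rw [reflect_finset_sum]
  refine Finset.sum_congr rfl fun k hk => ?_
  rw [reflect_C_mul_X_pow, revAt_le (h k hk)]

lemma I1q (g i : ℕ) (hg : 1 ≤ g) (hi : i ≤ g) (s : ExteriorAlgebra ℚ (Fin (2 * g) → ℚ))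
    (hs : s ∈ (LinearMap.range (ExteriorAlgebra.ι ℚ (M := Fin (2 * g) → ℚ))) ^ (2 * g - 2 * i)) :
    PDq g i s * PAq g = C s * X ^ (i + g) := by
  obtain ⟨t, ht⟩ := qq_mul_F1 i g hi
  have e1 : (C s * aeval (zE g) (qqE (-4) (i+1))) * aeval (zE g) (qqE 4 (g+1)) = C s := by
    rw [mul_assoc, ← map_mul, ht, map_add, map_one, mul_add, mul_one,
      Cs_aeval_trunc g i hi s hs t, add_zero]
  have hb1 : (C s * aeval (zE g) (qqE (-4) (i+1))).natDegree ≤ i := by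
    rw [Cs_aeval_qq]
    exact natDeg_sum_le (range (i+1)) _ (fun k => k) i fun k hk =>
      Nat.lt_succ_iff.mp (Finset.mem_range.mp hk)
  have hbA : (aeval (zE g) (qqE 4 (g+1)) :
      Polynomial (ExteriorAlgebra ℚ (Fin (2 * g) → ℚ))).natDegree ≤ g := by
    rw [aeval_qq]
    exact natDeg_sum_le (range (g+1)) _ (fun k => k) g fun k hk =>
      Nat.lt_succ_iff.mp (Finset.mem_range.mp hk)
  have h2 := congrArg (reflect (i + g)) e1
  rw [reflect_mul _ _ hb1 hbA, reflect_C] at h2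
  rw [← h2]
  congr 1
  · rw [Cs_aeval_qq, refl_sum i (range (i+1)) _ (fun k => k) (fun k hk =>
      Nat.lt_succ_iff.mp (Finset.mem_range.mp hk)), PDq]
  · rw [aeval_qq, refl_sum g (range (g+1)) _ (fun k => k) (fun k hk =>
      Nat.lt_succ_iff.mp (Finset.mem_range.mp hk)), PAq]
    exact Finset.sum_congr rfl fun j _ => rfl

lemma I2q (g i : ℕ) (hg : 1 ≤ g) (hi : i ≤ g) (s : ExteriorAlgebra ℚ (Fin (2 * g) → ℚ))
    (hs : s ∈ (LinearMap.range (ExteriorAlgebra.ι ℚ (M := Fin (2 * g) → ℚ))) ^ (2 * g - 2 * i)) :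
    PBq g i s * PAq g = PDlXq g i s
      + C ((((-4:ℚ) ^ i / (Nat.factorial i : ℚ) - (-8:ℚ) ^ i / (Nat.factorial i : ℚ)))
          • (omegaE g ^ i * s)) * X ^ (g - 1) := by
  obtain ⟨t, ht⟩ := qq_mul_F2 i g hi
  set δ : ℚ := (-4:ℚ) ^ i / (Nat.factorial i : ℚ) - (-8:ℚ) ^ i / (Nat.factorial i : ℚ) with hδ
  have e2 : (X * (C s * aeval (zE g) (qqE (-8) i))) * aeval (zE g) (qqE 4 (g+1))
      = X * (C s * aeval (zE g) (qqE (-4) i)) + C (δ • (omegaE g ^ i * s)) * X ^ (i + 1) := by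
    have expand : C s * aeval (zE g) (qqE (-8) i * qqE 4 (g+1))
        = C s * aeval (zE g) (qqE (-4) i) + C (δ • (omegaE g ^ i * s)) * X ^ i := by
      rw [ht, map_add, map_add, mul_add, mul_add, Cs_aeval_trunc g i hi s hs t, add_zero,
        key_term g s δ i]
    rw [mul_assoc, mul_assoc, ← map_mul, expand, mul_add]
    congr 1
    rw [X_mul, mul_assoc, ← pow_succ]
  have hbB : (X * (C s * aeval (zE g) (qqE (-8) i))).natDegree ≤ i := by
    rw [X_shift]
    exact natDeg_sum_le (range i) _ (fun k => k + 1) i fun k hk =>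
      Finset.mem_range.mp hk
  have hbA : (aeval (zE g) (qqE 4 (g+1)) :
      Polynomial (ExteriorAlgebra ℚ (Fin (2 * g) → ℚ))).natDegree ≤ g := by
    rw [aeval_qq]
    exact natDeg_sum_le (range (g+1)) _ (fun k => k) g fun k hk =>
      Nat.lt_succ_iff.mp (Finset.mem_range.mp hk)
  have h2 := congrArg (reflect (i + g)) e2
  rw [reflect_mul _ _ hbB hbA, reflect_add] at h2
  have hPB : reflect i (X * (C s * aeval (zE g) (qqE (-8) i))) = PBq g i s := by
    rw [X_shift, refl_sum i (range i) _ (fun k => k + 1) (fun k hk =>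
      Finset.mem_range.mp hk), PBq]
  have hPDl : reflect (i + g) (X * (C s * aeval (zE g) (qqE (-4) i))) = PDlXq g i s := by
    rw [X_shift, refl_sum (i + g) (range i) _ (fun k => k + 1) (fun k hk => by
      have := Finset.mem_range.mp hk; show k + 1 ≤ i + g; omega), PDlXq]
  have hδterm : reflect (i + g) (C (δ • (omegaE g ^ i * s)) * X ^ (i + 1))
      = C (δ • (omegaE g ^ i * s)) * X ^ (g - 1) := by
    rw [reflect_C_mul_X_pow, revAt_le (show i + 1 ≤ i + g by omega),
      show i + g - (i + 1) = g - 1 by omega]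
  have hPA : reflect g (aeval (zE g) (qqE 4 (g+1)) :
      Polynomial (ExteriorAlgebra ℚ (Fin (2 * g) → ℚ))) = PAq g := by
    rw [aeval_qq, refl_sum g (range (g+1)) _ (fun k => k) (fun k hk =>
      Nat.lt_succ_iff.mp (Finset.mem_range.mp hk)), PAq]
    exact Finset.sum_congr rfl fun j _ => rfl
  rw [hPB, hPA, hPDl, hδterm] at h2
  exact h2

lemma I3q (g i : ℕ) (hg : 1 ≤ g) (hi : i ≤ g) (s : ExteriorAlgebra ℚ (Fin (2 * g) → ℚ)) :
    PDq g i s * X ^ (g - 1)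
      = PDlXq g i s
        + C (((-4:ℚ) ^ i / (Nat.factorial i : ℚ)) • (omegaE g ^ i * s)) * X ^ (g-1) := by
  rw [PDq, Finset.sum_range_succ, add_mul, Finset.sum_mul]
  congr 1
  · rw [PDlXq]
    refine Finset.sum_congr rfl fun k hk => ?_
    have hk' := Finset.mem_range.mp hk
    rw [mul_assoc, ← pow_add]
    congr 2
    omega
  · rw [Nat.sub_self, pow_zero, mul_one]

/-- Lemma 9: in `QH^*(N) = Λ(φ₁,…,φ_{2g})[h]/(h^g + c₁h^{g−1} + ⋯ + c_g = 1)` with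
`c_i = (4^i/i!)ω^i`, for `s` of exterior degree `2g − 2i` (with `0 ≤ i ≤ g`), the
reduction `r` of `h^{2g−1+i}·s` modulo the relation has `h`-degree at most `g−1`, and the
component of its `h^{g−1}`-coefficient in top exterior degree `2g` equals
`((−8)^i/i!)·ω^i·s`; i.e. the coefficient differs from `((−8)^i/i!)·ω^i·s` by an element
of exterior degree `< 2g`. -/
theorem stmt_11 (g i : ℕ) (hg : 1 ≤ g) (hi : i ≤ g)
    (s : ExteriorAlgebra ℚ (Fin (2 * g) → ℚ))
    (hs : s ∈ (LinearMap.range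
        (ExteriorAlgebra.ι ℚ (M := Fin (2 * g) → ℚ))) ^ (2 * g - 2 * i)) :
    ∃ u r : Polynomial (ExteriorAlgebra ℚ (Fin (2 * g) → ℚ)),
      X ^ (2 * g - 1 + i) * C s = u * relE g + r ∧
      r.natDegree ≤ g - 1 ∧
      r.coeff (g - 1) - ((-8 : ℚ) ^ i / (Nat.factorial i)) • ((omegaE g) ^ i * s)
        ∈ ⨆ j : Fin (2 * g), (LinearMap.range
            (ExteriorAlgebra.ι ℚ (M := Fin (2 * g) → ℚ))) ^ (j : ℕ) := by
  have hPA := PAq_eq_relE g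
  have hI1 := I1q g i hg hi s hs
  have hI2 := I2q g i hg hi s hs
  have hI3 := I3q g i hg hi s
  refine ⟨PDq g i s * X ^ (g - 1) + PBq g i s,
    PBq g i s
      + C (((-8 : ℚ) ^ i / (Nat.factorial i : ℚ)) • (omegaE g ^ i * s)) * X ^ (g - 1),
    ?_, ?_, ?_⟩
  · -- main equation
    have step0 : (PDq g i s * X ^ (g - 1)) * PAq g = X ^ (2 * g - 1 + i) * C s := by
      rw [mul_assoc, X_pow_mul (n := g - 1) (p := PAq g), ← mul_assoc, hI1, mul_assoc,
        ← pow_add, show i + g + (g - 1) = 2 * g - 1 + i by omega, ← X_pow_mul]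
    have h2 : PDlXq g i s
        = PBq g i s * relE g + PBq g i s
          - C ((((-4:ℚ) ^ i / (Nat.factorial i : ℚ) - (-8:ℚ) ^ i / (Nat.factorial i : ℚ)))
              • (omegaE g ^ i * s)) * X ^ (g - 1) := by
      have h := hI2
      rw [hPA, mul_add, mul_one] at h
      exact eq_sub_of_add_eq h.symm
    have hc : C (((-4:ℚ) ^ i / (Nat.factorial i : ℚ)) • (omegaE g ^ i * s)) * X ^ (g - 1)
        - C ((((-4:ℚ) ^ i / (Nat.factorial i : ℚ) - (-8:ℚ) ^ i / (Nat.factorial i : ℚ)))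
            • (omegaE g ^ i * s)) * X ^ (g - 1)
        = C (((-8:ℚ) ^ i / (Nat.factorial i : ℚ)) • (omegaE g ^ i * s)) * X ^ (g - 1) := by
      rw [← sub_mul, ← map_sub, ← sub_smul]
      norm_num
    have hPDX : PDq g i s * X ^ (g - 1)
        = PBq g i s * relE g + PBq g i s
          + C (((-8:ℚ) ^ i / (Nat.factorial i : ℚ)) • (omegaE g ^ i * s)) * X ^ (g - 1) := by
      rw [hI3, h2, ← hc]
      abel
    rw [← step0, hPA, mul_add, mul_one, add_mul, hPDX]
    abel
  · -- degree bound
    refine (natDegree_add_le _ _).trans (max_le ?_ ?_)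
    · rw [PBq]
      exact natDeg_sum_le (range i) _ (fun k => i - (k + 1)) (g - 1) fun k hk => by
        have := Finset.mem_range.mp hk; show i - (k + 1) ≤ g - 1; omega
    · exact natDegree_C_mul_X_pow_le _ _
  · -- top coefficient
    have hco : (PBq g i s
        + C (((-8 : ℚ) ^ i / (Nat.factorial i : ℚ)) • (omegaE g ^ i * s))
            * X ^ (g - 1)).coeff (g - 1)
        - ((-8 : ℚ) ^ i / (Nat.factorial i : ℚ)) • (omegaE g ^ i * s)
        = (PBq g i s).coeff (g - 1) := by
      rw [coeff_add, coeff_C_mul, coeff_X_pow, if_pos rfl, mul_one, add_sub_cancel_right]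
    rw [hco, PBq, finset_sum_coeff]
    refine Submodule.sum_mem _ fun k hk => ?_
    have hk' := Finset.mem_range.mp hk
    rw [coeff_C_mul, coeff_X_pow]
    by_cases h : g - 1 = i - (k + 1)
    · rw [if_pos h, mul_one]
      refine Submodule.mem_iSup_of_mem ⟨2 * k + (2 * g - 2 * i), by omega⟩ ?_
      exact Submodule.smul_mem _ _ (omega_pow_mul_mem g k _ s hs)
    · rw [if_neg h, mul_zero]
      exact Submodule.zero_mem _
end

section
/- Define Q_r^1, Q_r^2, Q_r^3 ∈ Q[α,β,γ] by Q_0^1 = 1, Q_0^2 = Q_0^3 = 0 and, for fixed g and all r ≥ 0: Q_{r+1}^1 = αQ_r^1 + r²Q_r^2, Q_{r+1}^2 = (β + (−1)^{r+g+1}8)Q_r^1 + (2r/(r+1))Q_r^3, Q_{r+1}^3 = γQ_r^1. Then for every r ≥ 1, the ideal (Q_{r+1}^1, Q_{r+1}^2, Q_{r+1}^3) is contained in the ideal (Q_r^1, Q_r^2, Q_r^3), and γ·(Q_r^1, Q_r^2, Q_r^3) ⊆ (Q_{r+1}^1, Q_{r+1}^2, Q_{r+1}^3). -/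
open MvPolynomial

/-- Lemma 17 for the quantum relation ideals: with the quantum polynomials `Q_r^i` defined
by `Q_0^1 = 1`, `Q_0^2 = Q_0^3 = 0` and the recursion
`Q_{r+1}^1 = αQ_r^1 + r²Q_r^2`, `Q_{r+1}^2 = (β + (−1)^{r+g+1}·8)Q_r^1 + (2r/(r+1))Q_r^3`,
`Q_{r+1}^3 = γQ_r^1` (with `α = X 0`, `β = X 1`, `γ = X 2`, `d_{r+1} = 0`,
`c_{r+1} = (−1)^{(r+1)+g+1}·8`), the ideals `J_r = (Q_r^1, Q_r^2, Q_r^3)` of `ℚ[α,β,γ]`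
satisfy `γ·J_r ⊆ J_{r+1} ⊆ J_r` for all `r ≥ 1`. -/
theorem stmt_14 (g : ℕ) (Q1 Q2 Q3 : ℕ → MvPolynomial (Fin 3) ℚ)
    (h01 : Q1 0 = 1) (h02 : Q2 0 = 0) (h03 : Q3 0 = 0)
    (hrec : ∀ r : ℕ,
      Q1 (r + 1) = X 0 * Q1 r + C ((r : ℚ) ^ 2) * Q2 r ∧
      Q2 (r + 1) = (X 1 + C ((-1 : ℚ) ^ (r + g + 1) * 8)) * Q1 r
          + C ((2 * r : ℚ) / (r + 1)) * Q3 r ∧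
      Q3 (r + 1) = X 2 * Q1 r) :
    ∀ r : ℕ, 1 ≤ r →
      Ideal.span {Q1 (r + 1), Q2 (r + 1), Q3 (r + 1)} ≤
        Ideal.span {Q1 r, Q2 r, Q3 r} ∧
      ∀ f ∈ Ideal.span ({Q1 r, Q2 r, Q3 r} : Set (MvPolynomial (Fin 3) ℚ)),
        X 2 * f ∈ Ideal.span {Q1 (r + 1), Q2 (r + 1), Q3 (r + 1)} := by
  intro r hr
  obtain ⟨h1, h2, h3⟩ := hrec r
  have hr0 : (r : ℚ) ≠ 0 := Nat.cast_ne_zero.mpr (by omega)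
  have hr1 : (r : ℚ) + 1 ≠ 0 := by positivity
  have m1 : Q1 r ∈ Ideal.span {Q1 r, Q2 r, Q3 r} := Ideal.subset_span (by simp)
  have m2 : Q2 r ∈ Ideal.span {Q1 r, Q2 r, Q3 r} := Ideal.subset_span (by simp)
  have m3 : Q3 r ∈ Ideal.span {Q1 r, Q2 r, Q3 r} := Ideal.subset_span (by simp)
  have n1 : Q1 (r + 1) ∈ Ideal.span {Q1 (r + 1), Q2 (r + 1), Q3 (r + 1)} :=
    Ideal.subset_span (by simp)
  have n2 : Q2 (r + 1) ∈ Ideal.span {Q1 (r + 1), Q2 (r + 1), Q3 (r + 1)} :=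
    Ideal.subset_span (by simp)
  have n3 : Q3 (r + 1) ∈ Ideal.span {Q1 (r + 1), Q2 (r + 1), Q3 (r + 1)} :=
    Ideal.subset_span (by simp)
  constructor
  · rw [Ideal.span_le]
    rintro x hx
    simp only [Set.mem_insert_iff, Set.mem_singleton_iff] at hx
    rcases hx with rfl | rfl | rfl
    · rw [h1]
      exact add_mem (Ideal.mul_mem_left _ _ m1) (Ideal.mul_mem_left _ _ m2)
    · rw [h2]
      exact add_mem (Ideal.mul_mem_left _ _ m1) (Ideal.mul_mem_left _ _ m3)
    · rw [h3]
      exact Ideal.mul_mem_left _ _ m1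
  · intro f hf
    set J := Ideal.span {Q1 (r + 1), Q2 (r + 1), Q3 (r + 1)} with hJ
    have k1 : X 2 * Q1 r ∈ J := h3 ▸ n3
    have k2 : X 2 * Q2 r ∈ J := by
      have e : C ((r : ℚ) ^ 2) * (X 2 * Q2 r) = X 2 * Q1 (r + 1) - X 0 * Q3 (r + 1) := by
        rw [h1, h3]; ring
      have mem : C ((r : ℚ) ^ 2) * (X 2 * Q2 r) ∈ J :=
        e ▸ sub_mem (Ideal.mul_mem_left _ _ n1) (Ideal.mul_mem_left _ _ n3)
      have e2 : X 2 * Q2 r = C ((r : ℚ) ^ 2)⁻¹ * (C ((r : ℚ) ^ 2) * (X 2 * Q2 r)) := by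
        rw [← mul_assoc, ← C_mul, inv_mul_cancel₀ (pow_ne_zero 2 hr0), C_1, one_mul]
      rw [e2]
      exact Ideal.mul_mem_left _ _ mem
    have k3 : X 2 * Q3 r ∈ J := by
      have e : C ((2 * r : ℚ) / (r + 1)) * (X 2 * Q3 r) =
          X 2 * Q2 (r + 1) - (X 1 + C ((-1 : ℚ) ^ (r + g + 1) * 8)) * Q3 (r + 1) := by
        rw [h2, h3]; ring
      have mem : C ((2 * r : ℚ) / (r + 1)) * (X 2 * Q3 r) ∈ J :=
        e ▸ sub_mem (Ideal.mul_mem_left _ _ n2) (Ideal.mul_mem_left _ _ n3)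
      have hc : ((2 * r : ℚ) / (r + 1)) ≠ 0 :=
        div_ne_zero (by simpa using hr0) hr1
      have e2 : X 2 * Q3 r =
          C ((2 * r : ℚ) / (r + 1))⁻¹ * (C ((2 * r : ℚ) / (r + 1)) * (X 2 * Q3 r)) := by
        rw [← mul_assoc, ← C_mul, inv_mul_cancel₀ hc, C_1, one_mul]
      rw [e2]
      exact Ideal.mul_mem_left _ _ mem
    refine Submodule.span_induction ?_ ?_ ?_ ?_ hf
    · intro x hx
      simp only [Set.mem_insert_iff, Set.mem_singleton_iff] at hx
      rcases hx with rfl | rfl | rfl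
      exacts [k1, k2, k3]
    · simp
    · intro a b _ _ ha hb
      rw [mul_add]; exact add_mem ha hb
    · intro a b _ hb
      rw [smul_eq_mul, mul_left_comm]
      exact Ideal.mul_mem_left _ _ hb
end

section
/- For g = 2, the ring Q[α,β,γ]/(α² + β − 8, (β + 8)α + γ, αγ) is a finite-dimensional Q-vector space of dimension 4, with basis {1, α, β, γ} (equivalently {1, α, α², α³} since β = 8 − α² and γ = −(β+8)α = (α² − 16)α modulo the ideal). -/
open MvPolynomial

/-- The genus-2 quantum relation ideal `(α² + β − 8, (β + 8)α + γ, αγ)` in `ℚ[α,β,γ]`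
(`α = X 0`, `β = X 1`, `γ = X 2`). -/
noncomputable def genus2Ideal : Ideal (MvPolynomial (Fin 3) ℚ) :=
  Ideal.span {X 0 ^ 2 + X 1 - C 8, (X 1 + C 8) * X 0 + X 2, X 0 * X 2}

/-!
Modulo the ideal, `β = 8 − α²` and `γ = α³ − 16α`, and then `αγ = 0` reads `α⁴ = 16α²`.
So the quotient is `ℚ[x]/(x⁴ − 16x²)`, whose power basis `1, x, x², x³` gives dimension 4;
since `α² = 8 − β` and `α³ = γ + 16α`, the elements `1, α, β, γ` span as well, hence form a basis.
-/

local notation "𝓡" => MvPolynomial (Fin 3) ℚ ⧸ genus2Ideal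
local notation "α" => Ideal.Quotient.mk genus2Ideal (X 0 : MvPolynomial (Fin 3) ℚ)
local notation "β" => Ideal.Quotient.mk genus2Ideal (X 1 : MvPolynomial (Fin 3) ℚ)
local notation "γ" => Ideal.Quotient.mk genus2Ideal (X 2 : MvPolynomial (Fin 3) ℚ)

noncomputable def genus2Quartic : Polynomial ℚ := Polynomial.X ^ 4 - 16 * Polynomial.X ^ 2

theorem natDegree_genus2Quartic : genus2Quartic.natDegree = 4 := by
  unfold genus2Quartic; compute_degree!

theorem genus2Quartic_ne_zero : genus2Quartic ≠ 0 := fun h => by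
  simpa [h] using natDegree_genus2Quartic

theorem aeval_genus2Quartic {A : Type*} [CommRing A] [Algebra ℚ A] (x : A) :
    Polynomial.aeval x genus2Quartic = x ^ 4 - 16 * x ^ 2 := by
  simp only [genus2Quartic, map_sub, map_mul, map_pow, Polynomial.aeval_X, map_ofNat]

theorem genus2_relations : α ^ 2 + β - 8 = 0 ∧ (β + 8) * α + γ = 0 ∧ α * γ = 0 := by
  have hmk : ∀ p ∈ ({X 0 ^ 2 + X 1 - C 8, (X 1 + C 8) * X 0 + X 2, X 0 * X 2} :
      Set (MvPolynomial (Fin 3) ℚ)), Ideal.Quotient.mk genus2Ideal p = 0 :=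
    fun p hp => Ideal.Quotient.eq_zero_iff_mem.2 (Ideal.subset_span hp)
  have h₁ := hmk (X 0 ^ 2 + X 1 - C 8) (by simp)
  have h₂ := hmk ((X 1 + C 8) * X 0 + X 2) (by simp)
  have h₃ := hmk (X 0 * X 2) (by simp)
  simp only [map_add, map_sub, map_mul, map_pow, map_ofNat] at h₁ h₂ h₃
  exact ⟨h₁, h₂, h₃⟩

theorem mk_X1_eq : β = 8 - α ^ 2 := by
  linear_combination genus2_relations.1

theorem mk_X2_eq : γ = α ^ 3 - 16 * α := by
  obtain ⟨h₁, h₂, -⟩ := genus2_relations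
  linear_combination h₂ - α * h₁

theorem aeval_mk_X0_genus2Quartic : Polynomial.aeval α genus2Quartic = 0 := by
  obtain ⟨h₁, h₂, h₃⟩ := genus2_relations
  rw [aeval_genus2Quartic]
  linear_combination h₃ - α * (h₂ - α * h₁)

theorem root_genus2Quartic :
    AdjoinRoot.root genus2Quartic ^ 4 - 16 * AdjoinRoot.root genus2Quartic ^ 2 = 0 := by
  rw [← aeval_genus2Quartic, AdjoinRoot.aeval_eq, AdjoinRoot.mk_self]

noncomputable def genus2ToAdjoinRoot : 𝓡 →ₐ[ℚ] AdjoinRoot genus2Quartic :=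
  let r := AdjoinRoot.root genus2Quartic
  Ideal.Quotient.liftₐ genus2Ideal (aeval ![r, 8 - r ^ 2, r ^ 3 - 16 * r]) <| by
    refine fun p hp => (Ideal.span_le (I := RingHom.ker _)).2 ?_ hp
    rintro _ (rfl | rfl | rfl) <;> simp only [SetLike.mem_coe, RingHom.mem_ker, map_add, map_sub,
      map_mul, map_pow, map_ofNat, aeval_X, Matrix.cons_val]
    · ring
    · ring
    · linear_combination root_genus2Quartic

noncomputable def adjoinRootToGenus2 : AdjoinRoot genus2Quartic →ₐ[ℚ] 𝓡 :=
  AdjoinRoot.liftAlgHom genus2Quartic (Algebra.ofId ℚ 𝓡) α aeval_mk_X0_genus2Quartic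

theorem genus2ToAdjoinRoot_mk_X0 : genus2ToAdjoinRoot α = AdjoinRoot.root genus2Quartic :=
  aeval_X _ 0

theorem adjoinRootToGenus2_root : adjoinRootToGenus2 (AdjoinRoot.root genus2Quartic) = α :=
  AdjoinRoot.liftAlgHom_root _ _ _ _

noncomputable def genus2Equiv : 𝓡 ≃ₐ[ℚ] AdjoinRoot genus2Quartic :=
  AlgEquiv.ofAlgHom genus2ToAdjoinRoot adjoinRootToGenus2
    (AdjoinRoot.algHom_ext (by simp [adjoinRootToGenus2_root, genus2ToAdjoinRoot_mk_X0]))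
    (Ideal.Quotient.algHom_ext _ <| MvPolynomial.algHom_ext fun i => by
      fin_cases i <;>
        simp [mk_X1_eq, mk_X2_eq, map_ofNat, adjoinRootToGenus2_root, genus2ToAdjoinRoot_mk_X0])

noncomputable def genus2PowerBasis : PowerBasis ℚ 𝓡 :=
  (AdjoinRoot.powerBasis genus2Quartic_ne_zero).map genus2Equiv.symm

theorem genus2PowerBasis_gen : genus2PowerBasis.gen = α := by
  simp [genus2PowerBasis, genus2Equiv, adjoinRootToGenus2_root]

theorem genus2PowerBasis_dim : genus2PowerBasis.dim = 4 := by
  simp [genus2PowerBasis, natDegree_genus2Quartic]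

theorem finrank_genus2 : Module.finrank ℚ 𝓡 = 4 := by
  rw [genus2PowerBasis.finrank, genus2PowerBasis_dim]

theorem span_genus2_basis : Submodule.span ℚ ({1, α, β, γ} : Set 𝓡) = ⊤ := by
  set S := Submodule.span ℚ ({1, α, β, γ} : Set 𝓡)
  have hmem : ∀ x ∈ ({1, α, β, γ} : Set 𝓡), x ∈ S := fun x hx => Submodule.subset_span hx
  have hpow : ∀ n < 4, α ^ n ∈ S := by
    intro n hn
    interval_cases n
    · simpa using hmem 1 (by simp)
    · simpa using hmem α (by simp)
    · have h : α ^ 2 = (8 : ℚ) • 1 - β := by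
        rw [Algebra.smul_def (8 : ℚ) (1 : 𝓡), map_ofNat, mul_one, mk_X1_eq]; ring
      rw [h]
      exact sub_mem (S.smul_mem _ (hmem 1 (by simp))) (hmem β (by simp))
    · have h : α ^ 3 = γ + (16 : ℚ) • α := by
        rw [Algebra.smul_def (16 : ℚ) α, map_ofNat, mk_X2_eq]; ring
      rw [h]
      exact add_mem (hmem γ (by simp)) (S.smul_mem _ (hmem α (by simp)))
  rw [eq_top_iff, ← genus2PowerBasis.basis.span_eq, Submodule.span_le]
  rintro _ ⟨i, rfl⟩
  rw [genus2PowerBasis.coe_basis, genus2PowerBasis_gen]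
  exact hpow i (genus2PowerBasis_dim ▸ i.isLt)

/-- For `g = 2`, the ring `ℚ[α,β,γ]/(α² + β − 8, (β + 8)α + γ, αγ)` is a
`ℚ`-vector space of dimension 4, with basis the images of `1, α, β, γ`. -/
theorem stmt_16 :
    Module.finrank ℚ (MvPolynomial (Fin 3) ℚ ⧸ genus2Ideal) = 4 ∧
    LinearIndependent ℚ
      ![(1 : MvPolynomial (Fin 3) ℚ ⧸ genus2Ideal),
        Ideal.Quotient.mk genus2Ideal (X 0),
        Ideal.Quotient.mk genus2Ideal (X 1),
        Ideal.Quotient.mk genus2Ideal (X 2)] ∧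
    Submodule.span ℚ
      ({(1 : MvPolynomial (Fin 3) ℚ ⧸ genus2Ideal),
        Ideal.Quotient.mk genus2Ideal (X 0),
        Ideal.Quotient.mk genus2Ideal (X 1),
        Ideal.Quotient.mk genus2Ideal (X 2)} :
        Set (MvPolynomial (Fin 3) ℚ ⧸ genus2Ideal)) = ⊤ := by
  refine ⟨finrank_genus2, ?_, span_genus2_basis⟩
  refine linearIndependent_of_top_le_span_of_card_eq_finrank ?_ (by simp [finrank_genus2])
  simp only [Matrix.range_cons, Matrix.range_empty, Set.union_empty, Set.singleton_union,
    span_genus2_basis, le_refl]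
end
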